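/- Let X and Y be locally compact, connected Hausdorff spaces, ρ a quasi-integral on C_c(X), η a quasi-integral on C_c(Y), and suppose η × ρ is a quasi-integral on C_c(X × Y). Then η × ρ is simple if and only if there exist simple quasi-integrals ρ' on C_c(X) and η' on C_c(Y) such that η × ρ = η' × ρ' as functionals on C_c(X × Y). -/

import Mathlib

open scoped ENNReal CompactlySupported
open CompactlySupportedContinuousMap

namespace QLF

variable {X Y : Type*}

/-- Membership in the singly generated subalgebra `B(f)`:
`g ∈ B(f)` iff `g = φ ∘ f` for some continuous `φ` with `φ 0 = 0`. -/
def InB [TopologicalSpace X] (f g : C_c(X, ℝ)) : Prop :=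
  ∃ φ : C(ℝ, ℝ), φ 0 = 0 ∧ ∀ x, g x = φ (f x)

/-- A quasi-integral (quasi-linear functional) on `C_c(X)`. -/
structure IsQuasiIntegral [TopologicalSpace X] (ρ : C_c(X, ℝ) → ℝ) : Prop where
  smul : ∀ (a : ℝ) (f : C_c(X, ℝ)), ρ (a • f) = a * ρ f
  add : ∀ f g h : C_c(X, ℝ), InB f g → InB f h → ρ (g + h) = ρ g + ρ h
  pos : ∀ f : C_c(X, ℝ), (∀ x, 0 ≤ f x) → 0 ≤ ρ f

/-- The value of the topological measure corresponding to `ρ` on an open set. -/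
noncomputable def qiOpen [TopologicalSpace X] (ρ : C_c(X, ℝ) → ℝ) (U : Set X) : ℝ≥0∞ :=
  ⨆ (f : C_c(X, ℝ)) (_ : (∀ x, 0 ≤ f x ∧ f x ≤ 1) ∧ tsupport f ⊆ U), ENNReal.ofReal (ρ f)

open Classical in
/-- The topological measure corresponding to a quasi-integral `ρ`:
on open sets given by `qiOpen`, on other (closed) sets by outer regularity. -/
noncomputable def qiMeas [TopologicalSpace X] (ρ : C_c(X, ℝ) → ℝ) (A : Set X) : ℝ≥0∞ :=
  if IsOpen A then qiOpen ρ A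
  else ⨅ (U : Set X) (_ : IsOpen U ∧ A ⊆ U), qiOpen ρ U

/-- A topological measure on `X` (as a set function on all sets; only its values on
open and closed sets are constrained/meaningful). -/
def IsTopMeasure [TopologicalSpace X] (μ : Set X → ℝ≥0∞) : Prop :=
  (∀ A B : Set X, Disjoint A B → (IsCompact A ∨ IsOpen A) → (IsCompact B ∨ IsOpen B) →
      (IsCompact (A ∪ B) ∨ IsOpen (A ∪ B)) → μ (A ∪ B) = μ A + μ B) ∧
  (∀ U : Set X, IsOpen U → μ U = ⨆ (K : Set X) (_ : IsCompact K ∧ K ⊆ U), μ K) ∧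
  (∀ F : Set X, IsClosed F → μ F = ⨅ (U : Set X) (_ : IsOpen U ∧ F ⊆ U), μ U)

/-- A simple topological measure: assumes only the values 0 and 1 on open and closed sets. -/
def IsSimpleTM [TopologicalSpace X] (μ : Set X → ℝ≥0∞) : Prop :=
  IsTopMeasure μ ∧ ∀ A : Set X, IsOpen A ∨ IsClosed A → μ A = 0 ∨ μ A = 1

/-- A simple quasi-integral: its corresponding topological measure assumes only 0 and 1. -/
def IsSimpleQI [TopologicalSpace X] (ρ : C_c(X, ℝ) → ℝ) : Prop :=
  ∀ A : Set X, IsOpen A ∨ IsClosed A → qiMeas ρ A = 0 ∨ qiMeas ρ A = 1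

/-- An almost simple quasi-integral: its corresponding topological measure is a positive
scalar multiple of a simple topological measure. -/
def IsAlmostSimpleQI [TopologicalSpace X] (ρ : C_c(X, ℝ) → ℝ) : Prop :=
  ∃ (c : ℝ≥0∞) (μ' : Set X → ℝ≥0∞), 0 < c ∧ c ≠ ∞ ∧ IsSimpleTM μ' ∧
    ∀ A : Set X, IsOpen A ∨ IsClosed A → qiMeas ρ A = c * μ' A

/-- The composition `φ ∘ f` as an element of `C_c(X, ℝ)`, for continuous `φ` with `φ 0 = 0`. -/
noncomputable def compCc [TopologicalSpace X] (φ : C(ℝ, ℝ)) (hφ : φ 0 = 0)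
    (f : C_c(X, ℝ)) : C_c(X, ℝ) :=
  ⟨⟨fun x => φ (f x), φ.continuous.comp f.continuous⟩, f.hasCompactSupport'.comp_left hφ⟩

section Products

variable [TopologicalSpace X] [TopologicalSpace Y]

/-- The section `f_y ∈ C_c(X)` of `f ∈ C_c(X × Y)`, `f_y (x) = f (x, y)`. -/
noncomputable def fiberY [T2Space X] (f : C_c(X × Y, ℝ)) (y : Y) : C_c(X, ℝ) :=
  ⟨⟨fun x => f (x, y), f.continuous.comp (continuous_id.prodMk continuous_const)⟩,
    HasCompactSupport.intro (f.hasCompactSupport'.image continuous_fst)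
      (fun x hx => by
        by_contra h
        exact hx ⟨(x, y), subset_tsupport _ h, rfl⟩)⟩

/-- The section `f_x ∈ C_c(Y)` of `f ∈ C_c(X × Y)`, `f_x (y) = f (x, y)`. -/
noncomputable def fiberX [T2Space Y] (f : C_c(X × Y, ℝ)) (x : X) : C_c(Y, ℝ) :=
  ⟨⟨fun y => f (x, y), f.continuous.comp (continuous_const.prodMk continuous_id)⟩,
    HasCompactSupport.intro (f.hasCompactSupport'.image continuous_snd)
      (fun y hy => by
        by_contra h
        exact hy ⟨(x, y), subset_tsupport _ h, rfl⟩)⟩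

/-- `T_ρ(f) (y) = ρ (f_y)` as a bare function on `Y`. -/
noncomputable def Tmap [T2Space X] (ρ : C_c(X, ℝ) → ℝ) (f : C_c(X × Y, ℝ)) : Y → ℝ :=
  fun y => ρ (fiberY f y)

/-- `S_η(f) (x) = η (f_x)` as a bare function on `X`. -/
noncomputable def Smap [T2Space Y] (η : C_c(Y, ℝ) → ℝ) (f : C_c(X × Y, ℝ)) : X → ℝ :=
  fun x => η (fiberX f x)

open Classical in
/-- `T_ρ(f)` as an element of `C_c(Y, ℝ)` (when `ρ` is a quasi-integral, `T_ρ(f)` is indeed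
continuous with compact support, and this definition takes the first branch). -/
noncomputable def TCc [T2Space X] (ρ : C_c(X, ℝ) → ℝ) (f : C_c(X × Y, ℝ)) : C_c(Y, ℝ) :=
  if h : Continuous (Tmap ρ f) ∧ HasCompactSupport (Tmap ρ f)
  then ⟨⟨Tmap ρ f, h.1⟩, h.2⟩ else 0

open Classical in
/-- `S_η(f)` as an element of `C_c(X, ℝ)`. -/
noncomputable def SCc [T2Space Y] (η : C_c(Y, ℝ) → ℝ) (f : C_c(X × Y, ℝ)) : C_c(X, ℝ) :=
  if h : Continuous (Smap η f) ∧ HasCompactSupport (Smap η f)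
  then ⟨⟨Smap η f, h.1⟩, h.2⟩ else 0

/-- The repeated quasi-integral `(η × ρ) (f) = η (T_ρ (f))`. -/
noncomputable def prodQI [T2Space X] (η : C_c(Y, ℝ) → ℝ) (ρ : C_c(X, ℝ) → ℝ) :
    C_c(X × Y, ℝ) → ℝ := fun f => η (TCc ρ f)

/-- The repeated quasi-integral `(ρ × η) (f) = ρ (S_η (f))`. -/
noncomputable def prodQI' [T2Space Y] (ρ : C_c(X, ℝ) → ℝ) (η : C_c(Y, ℝ) → ℝ) :
    C_c(X × Y, ℝ) → ℝ := fun f => ρ (SCc η f)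

/-- The tensor product `(g ⊗ h) (x, y) = g (x) * h (y)` as an element of `C_c(X × Y, ℝ)`. -/
noncomputable def tensor (g : C_c(X, ℝ)) (h : C_c(Y, ℝ)) : C_c(X × Y, ℝ) :=
  ⟨⟨fun p => g p.1 * h p.2,
      (g.continuous.comp continuous_fst).mul (h.continuous.comp continuous_snd)⟩,
    HasCompactSupport.intro' (g.hasCompactSupport'.prod h.hasCompactSupport')
      ((isClosed_tsupport _).prod (isClosed_tsupport _))
      (fun p hp => by
        rcases not_and_or.mp (by simpa [Set.mem_prod] using hp) with h1 | h1
        · simp [image_eq_zero_of_notMem_tsupport h1]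
        · simp [image_eq_zero_of_notMem_tsupport h1])⟩

end Products

/-- A topological measure is subadditive (equivalently, extends to a Borel measure). -/
def IsSubadditiveOnOpens [TopologicalSpace X] (μ : Set X → ℝ≥0∞) : Prop :=
  ∀ U V : Set X, IsOpen U → IsOpen V → μ (U ∪ V) ≤ μ U + μ V

/-- `μ` is a positive scalar multiple of a point mass `δ_{x₀}` (on open and closed sets). -/
def IsPointMassMultiple [TopologicalSpace X] (μ : Set X → ℝ≥0∞) : Prop :=
  ∃ (c : ℝ≥0∞) (x₀ : X), 0 < c ∧ c ≠ ∞ ∧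
    ∀ A : Set X, IsOpen A ∨ IsClosed A →
      μ A = c * A.indicator (fun _ => (1 : ℝ≥0∞)) x₀

end QLF

/-!
Let `τ` be a simple quasi-integral of total mass one and `h ≥ 0`. Splitting `h = min h t + (h - t)⁺`
inside `B(h)` and using Markov's inequality `t μ_τ{h > t} ≤ τ h`, the open level sets `{h > t}`
have measure `1` for `t < τ h` and `0` for `t > τ h`; hence `τ (φ ∘ h) = φ (τ h)` for every
monotone continuous `φ` with `φ 0 = 0`. Applied fibrewise this gives `T_ρ (φ ∘ f) = φ ∘ T_ρ f`, so
`η × ρ` commutes with such `φ` as well, and replacing a competitor `f` on an open set `W` by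
`min (f / (η × ρ)(f)) 1` shows that `μ_{η × ρ}(W)` is `0` or `1`.

Conversely, tensor products `g ⊗ h` give `μ_{η × ρ}(U × V) = μ_ρ(U) μ_η(V)`. So if `η × ρ` is
simple, multiplying `ρ` by `μ_η(Y)` and `η` by `μ_ρ(X)` makes both factors simple and multiplies
the product by its total mass `μ_ρ(X) μ_η(Y) ∈ {0, 1}`; when that is `0`, `η × ρ` vanishes.
-/

namespace QLF

open Set Filter Topology

section Functional

variable {Z : Type*} [TopologicalSpace Z] {τ : C_c(Z, ℝ) → ℝ}

theorem IsQuasiIntegral.map_zero (hτ : IsQuasiIntegral τ) : τ 0 = 0 := by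
  simpa using hτ.smul 0 0

theorem IsQuasiIntegral.const_mul (hτ : IsQuasiIntegral τ) {c : ℝ} (hc : 0 ≤ c) :
    IsQuasiIntegral (fun f => c * τ f) where
  smul a f := by rw [hτ.smul]; ring
  add f g h hg hh := by rw [hτ.add f g h hg hh, mul_add]
  pos f hf := mul_nonneg hc (hτ.pos f hf)

theorem le_qiOpen {U : Set Z} {f : C_c(Z, ℝ)} (hf : ∀ x, 0 ≤ f x ∧ f x ≤ 1)
    (hfU : tsupport f ⊆ U) : ENNReal.ofReal (τ f) ≤ qiOpen τ U :=
  le_iSup₂ (f := fun (f : C_c(Z, ℝ)) (_ : (∀ x, 0 ≤ f x ∧ f x ≤ 1) ∧ tsupport f ⊆ U) =>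
    ENNReal.ofReal (τ f)) f ⟨hf, hfU⟩

theorem qiOpen_le {U : Set Z} {c : ℝ≥0∞}
    (h : ∀ f : C_c(Z, ℝ), (∀ x, 0 ≤ f x ∧ f x ≤ 1) → tsupport f ⊆ U →
      ENNReal.ofReal (τ f) ≤ c) :
    qiOpen τ U ≤ c :=
  iSup₂_le fun f hf => h f hf.1 hf.2

theorem qiOpen_mono {U V : Set Z} (h : U ⊆ V) : qiOpen τ U ≤ qiOpen τ V :=
  qiOpen_le fun _ hf hfU => le_qiOpen hf (hfU.trans h)

theorem exists_pos_of_qiOpen_ne_zero {U : Set Z} (hU : qiOpen τ U ≠ 0) :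
    ∃ f : C_c(Z, ℝ), (∀ x, 0 ≤ f x ∧ f x ≤ 1) ∧ tsupport f ⊆ U ∧ 0 < τ f := by
  by_contra! h
  exact hU (nonpos_iff_eq_zero.mp (qiOpen_le fun f hf hfU => by
    simpa using h f hf hfU))

theorem qiOpen_const_mul {c : ℝ} (hc : 0 ≤ c) (U : Set Z) :
    qiOpen (fun f => c * τ f) U = ENNReal.ofReal c * qiOpen τ U := by
  simp only [qiOpen, ENNReal.mul_iSup, ENNReal.ofReal_mul hc]

theorem IsSimpleQI.qiOpen_eq_zero_or_one (hs : IsSimpleQI τ) {U : Set Z} (hU : IsOpen U) :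
    qiOpen τ U = 0 ∨ qiOpen τ U = 1 := by
  simpa [qiMeas, hU] using hs U (Or.inl hU)

theorem isSimpleQI_of_qiOpen (h : ∀ U : Set Z, IsOpen U → qiOpen τ U = 0 ∨ qiOpen τ U = 1) :
    IsSimpleQI τ := by
  intro A _
  by_cases hA : IsOpen A
  · simpa [qiMeas, hA] using h A hA
  simp only [qiMeas, if_neg hA]
  by_cases h0 : ∃ U, (IsOpen U ∧ A ⊆ U) ∧ qiOpen τ U = 0
  · obtain ⟨U, hU, hU0⟩ := h0
    exact Or.inl (nonpos_iff_eq_zero.mp (hU0 ▸ iInf₂_le U hU))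
  have h1 : ∀ U, IsOpen U ∧ A ⊆ U → qiOpen τ U = 1 := fun U hU =>
    (h U hU.1).resolve_left fun hU0 => h0 ⟨U, hU, hU0⟩
  exact Or.inr (le_antisymm (h1 univ ⟨isOpen_univ, subset_univ A⟩ ▸ iInf₂_le univ
    ⟨isOpen_univ, subset_univ A⟩) (le_iInf₂ fun U hU => (h1 U hU).ge))

theorem tsupport_compCc_subset (φ : C(ℝ, ℝ)) (hφ : φ 0 = 0) (f : C_c(Z, ℝ)) :
    tsupport (compCc φ hφ f) ⊆ tsupport f :=
  tsupport_comp_subset hφ f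

def cap (s : ℝ) : C(ℝ, ℝ) := ⟨fun r => min r s, by fun_prop⟩

def excess (s : ℝ) : C(ℝ, ℝ) := ⟨fun r => max (r - s) 0, by fun_prop⟩

@[simp] theorem cap_apply (s r : ℝ) : cap s r = min r s := rfl

@[simp] theorem excess_apply (s r : ℝ) : excess s r = max (r - s) 0 := rfl

theorem cap_zero {s : ℝ} (hs : 0 ≤ s) : cap s 0 = 0 := min_eq_left hs

theorem excess_zero {s : ℝ} (hs : 0 ≤ s) : excess s 0 = 0 := by simpa using hs

theorem IsQuasiIntegral.map_eq_cap_add_excess (hτ : IsQuasiIntegral τ) (f : C_c(Z, ℝ))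
    {s : ℝ} (hs : 0 ≤ s) :
    τ f = τ (compCc (cap s) (cap_zero hs) f) + τ (compCc (excess s) (excess_zero hs) f) := by
  have hsplit : f = compCc (cap s) (cap_zero hs) f + compCc (excess s) (excess_zero hs) f := by
    ext x
    simp only [CompactlySupportedContinuousMap.coe_add, Pi.add_apply, compCc, cap_apply,
      excess_apply, CompactlySupportedContinuousMap.coe_mk, ContinuousMap.coe_mk]
    rcases le_total (f x) s with h | h
    · rw [min_eq_left h, max_eq_right (by linarith)]; ring
    · rw [min_eq_right h, max_eq_left (by linarith)]; ring
  conv_lhs => rw [hsplit]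
  exact hτ.add f _ _ ⟨cap s, cap_zero hs, fun _ => rfl⟩ ⟨excess s, excess_zero hs, fun _ => rfl⟩

theorem IsQuasiIntegral.ofReal_map_le (hτ : IsQuasiIntegral τ) {h : C_c(Z, ℝ)} {M : ℝ}
    (h0 : ∀ x, 0 ≤ h x) (hM : ∀ x, h x ≤ M) {V : Set Z} (hV : tsupport h ⊆ V) :
    ENNReal.ofReal (τ h) ≤ ENNReal.ofReal M * qiOpen τ V := by
  rcases le_or_gt M 0 with hM0 | hM0
  · have : h = 0 := by ext x; exact le_antisymm ((hM x).trans hM0) (h0 x)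
    simp [this, hτ.map_zero]
  have hscale : h = M • (M⁻¹ • h) := by rw [smul_smul, mul_inv_cancel₀ hM0.ne', one_smul]
  have hnorm : ∀ x, 0 ≤ (M⁻¹ • h) x ∧ (M⁻¹ • h) x ≤ 1 := fun x => by
    simp only [CompactlySupportedContinuousMap.coe_smul, Pi.smul_apply, smul_eq_mul]
    exact ⟨mul_nonneg (inv_nonneg.mpr hM0.le) (h0 x), inv_mul_le_one_of_le₀ (hM x) hM0.le⟩
  calc ENNReal.ofReal (τ h) = ENNReal.ofReal M * ENNReal.ofReal (τ (M⁻¹ • h)) := by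
        conv_lhs => rw [hscale]
        rw [hτ.smul, ENNReal.ofReal_mul hM0.le]
    _ ≤ ENNReal.ofReal M * qiOpen τ V :=
        mul_le_mul_right (le_qiOpen hnorm
          ((tsupport_smul_subset_right (fun _ => M⁻¹) h).trans hV)) _

theorem IsQuasiIntegral.map_eq_zero_of_qiOpen_eq_zero (hτ : IsQuasiIntegral τ)
    {h : C_c(Z, ℝ)} (h0 : ∀ x, 0 ≤ h x) {V : Set Z} (hV : tsupport h ⊆ V)
    (hV0 : qiOpen τ V = 0) : τ h = 0 := by
  obtain ⟨M, hM⟩ := (h.hasCompactSupport'.isCompact_range h.continuous).bddAbove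
  have := hτ.ofReal_map_le h0 (fun x => hM ⟨x, rfl⟩) hV
  rw [hV0, mul_zero, nonpos_iff_eq_zero, ENNReal.ofReal_eq_zero] at this
  exact le_antisymm this (hτ.pos h h0)

theorem IsQuasiIntegral.eq_zero_of_qiOpen_univ_eq_zero (hτ : IsQuasiIntegral τ)
    (h0 : qiOpen τ univ = 0) (f : C_c(Z, ℝ)) : τ f = 0 := by
  have hpos : ∀ g : C_c(Z, ℝ), (∀ x, 0 ≤ g x) → τ g = 0 := fun g hg =>
    hτ.map_eq_zero_of_qiOpen_eq_zero hg (subset_univ _) h0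
  have hneg : compCc (cap 0) (cap_zero le_rfl) f
      = (-1 : ℝ) • compCc (excess 0) (excess_zero le_rfl) (-f) := by
    ext x
    rcases le_total (f x) 0 with h | h <;> simp [compCc, h]
  rw [hτ.map_eq_cap_add_excess f le_rfl, hneg, hτ.smul, hpos _ fun x => le_max_right _ _,
    hpos _ fun x => le_max_right _ _, mul_zero, add_zero]

theorem IsQuasiIntegral.map_le_of_eq_on_tsupport (hτ : IsQuasiIntegral τ) {a b : C_c(Z, ℝ)}
    {c : ℝ} (hc : 0 ≤ c) (ha : ∀ x, 0 ≤ a x ∧ a x ≤ c) (hb : ∀ x, 0 ≤ b x ∧ b x ≤ c)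
    (hbc : ∀ x ∈ tsupport a, b x = c) : τ a ≤ τ b := by
  -- both `a` and `b - a` lie in `B(a + b)`
  have key : ∀ x, a x = excess c ((a + b) x) ∧ (b - a) x = (cap c - excess c) ((a + b) x) := by
    intro x
    simp only [CompactlySupportedContinuousMap.coe_add, CompactlySupportedContinuousMap.coe_sub,
      Pi.add_apply, Pi.sub_apply, ContinuousMap.sub_apply, cap_apply, excess_apply]
    by_cases hx : x ∈ tsupport a
    · rw [hbc x hx, min_eq_right (by linarith [ha x]), max_eq_left (by linarith [ha x])]
      constructor <;> ring
    · rw [image_eq_zero_of_notMem_tsupport hx, min_eq_left (by linarith [hb x]),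
        max_eq_right (by linarith [hb x])]
      constructor <;> ring
  have hadd := hτ.add (a + b) a (b - a) ⟨excess c, excess_zero hc, fun x => (key x).1⟩
    ⟨cap c - excess c, by simp [cap_zero hc, excess_zero hc], fun x => (key x).2⟩
  rw [add_sub_cancel] at hadd
  have hba : 0 ≤ τ (b - a) := hτ.pos _ fun x => by
    simp only [CompactlySupportedContinuousMap.coe_sub, Pi.sub_apply, sub_nonneg]
    by_cases hx : x ∈ tsupport a
    · exact hbc x hx ▸ (ha x).2
    · exact image_eq_zero_of_notMem_tsupport hx ▸ (hb x).1
  linarith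

theorem IsQuasiIntegral.ofReal_mul_qiOpen_le (hτ : IsQuasiIntegral τ) {h : C_c(Z, ℝ)}
    (h0 : ∀ x, 0 ≤ h x) {t : ℝ} (ht : 0 < t) :
    ENNReal.ofReal t * qiOpen τ {x | t < h x} ≤ ENNReal.ofReal (τ h) := by
  simp only [qiOpen, ENNReal.mul_iSup]
  refine iSup₂_le fun g ⟨hg, hgU⟩ => ?_
  rw [← ENNReal.ofReal_mul ht.le, ← hτ.smul]
  refine ENNReal.ofReal_le_ofReal ?_
  have hcap : ∀ x, 0 ≤ cap t (h x) ∧ cap t (h x) ≤ t := fun x =>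
    ⟨le_min (h0 x) ht.le, min_le_right _ _⟩
  calc τ (t • g) ≤ τ (compCc (cap t) (cap_zero ht.le) h) := by
        refine hτ.map_le_of_eq_on_tsupport ht.le (fun x => ?_) hcap fun x hx => ?_
        · simp only [CompactlySupportedContinuousMap.coe_smul, Pi.smul_apply, smul_eq_mul]
          exact ⟨mul_nonneg ht.le (hg x).1, mul_le_of_le_one_right ht.le (hg x).2⟩
        · exact min_eq_right (hgU (tsupport_smul_subset_right (fun _ => t) g hx)).le
    _ ≤ τ h := by
        rw [hτ.map_eq_cap_add_excess h ht.le, le_add_iff_nonneg_right]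
        exact hτ.pos _ fun x => le_max_right _ _

theorem IsQuasiIntegral.map_le_of_qiOpen_eq_zero (hτ : IsQuasiIntegral τ)
    (htot : qiOpen τ univ ≤ 1) {h : C_c(Z, ℝ)} (h0 : ∀ x, 0 ≤ h x) {t : ℝ} (ht : 0 ≤ t)
    (hlevel : qiOpen τ {x | t < h x} = 0) : τ h ≤ t := by
  refine le_of_forall_gt_imp_ge_of_dense fun s hts => ?_
  have hs : 0 ≤ s := ht.trans hts.le
  have hexcess : τ (compCc (excess s) (excess_zero hs) h) = 0 := by
    refine hτ.map_eq_zero_of_qiOpen_eq_zero (fun x => le_max_right _ _) ?_ hlevel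
    refine (closure_minimal (fun x hx => ?_) (isClosed_le continuous_const h.continuous)).trans
      fun x (hx : s ≤ h x) => hts.trans_le hx
    by_contra hlt
    exact hx (max_eq_right (by simpa using (not_le.mp hlt).le))
  have hcap : τ (compCc (cap s) (cap_zero hs) h) ≤ s := by
    have := (hτ.ofReal_map_le (h := compCc (cap s) (cap_zero hs) h)
      (fun x => le_min (h0 x) hs) (fun x => min_le_right (h x) s) (subset_univ _)).trans
      (mul_le_of_le_one_right' htot)
    exact (ENNReal.ofReal_le_ofReal_iff hs).mp this
  linarith [hτ.map_eq_cap_add_excess h hs]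

theorem IsSimpleQI.qiOpen_lt_eq_one (hτ : IsQuasiIntegral τ) (hs : IsSimpleQI τ)
    (htot : qiOpen τ univ ≤ 1) {h : C_c(Z, ℝ)} (h0 : ∀ x, 0 ≤ h x) {t : ℝ} (ht : 0 ≤ t)
    (hlt : t < τ h) : qiOpen τ {x | t < h x} = 1 := by
  have hopen : IsOpen {x | t < h x} := isOpen_lt continuous_const h.continuous
  exact (hs.qiOpen_eq_zero_or_one hopen).resolve_left
    fun h' => (hτ.map_le_of_qiOpen_eq_zero htot h0 ht h').not_gt hlt

theorem IsSimpleQI.qiOpen_lt_eq_zero (hτ : IsQuasiIntegral τ) (hs : IsSimpleQI τ)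
    {h : C_c(Z, ℝ)} (h0 : ∀ x, 0 ≤ h x) {t : ℝ} (hlt : τ h < t) :
    qiOpen τ {x | t < h x} = 0 := by
  have ht : 0 < t := (hτ.pos h h0).trans_lt hlt
  have hopen : IsOpen {x | t < h x} := isOpen_lt continuous_const h.continuous
  refine (hs.qiOpen_eq_zero_or_one hopen).resolve_right fun h1 => hlt.not_ge ?_
  have := hτ.ofReal_mul_qiOpen_le h0 ht
  rwa [h1, mul_one, ENNReal.ofReal_le_ofReal_iff (hτ.pos h h0)] at this

theorem IsSimpleQI.map_compCc (hτ : IsQuasiIntegral τ) (hs : IsSimpleQI τ)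
    (htot : qiOpen τ univ ≤ 1) {h : C_c(Z, ℝ)} (h0 : ∀ x, 0 ≤ h x) {φ : C(ℝ, ℝ)}
    (hφ0 : φ 0 = 0) (hφ : Monotone φ) : τ (compCc φ hφ0 h) = φ (τ h) := by
  have ha : 0 ≤ τ h := hτ.pos h h0
  have hg0 : ∀ x, 0 ≤ compCc φ hφ0 h x := fun x => hφ0 ▸ hφ (h0 x)
  apply le_antisymm
  · refine le_of_forall_gt_imp_ge_of_dense fun s hs' => ?_
    have hev : ∀ᶠ t in 𝓝[>] τ h, φ t < s :=
      ((φ.continuous.tendsto _).eventually (gt_mem_nhds hs')).filter_mono nhdsWithin_le_nhds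
    obtain ⟨t, hts, hat : τ h < t⟩ := (hev.and self_mem_nhdsWithin).exists
    refine hτ.map_le_of_qiOpen_eq_zero htot hg0 ((hφ0 ▸ hφ ha).trans hs'.le)
      (nonpos_iff_eq_zero.mp ?_)
    calc qiOpen τ {x | s < compCc φ hφ0 h x}
        ≤ qiOpen τ {x | t < h x} :=
          qiOpen_mono fun x hx => lt_of_not_ge fun hle => (hφ hle).not_gt (hts.trans hx)
      _ = 0 := hs.qiOpen_lt_eq_zero hτ h0 hat
  · refine le_of_forall_lt_imp_le_of_dense fun s hs' => ?_
    rcases le_or_gt s 0 with hs0 | hs0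
    · exact hs0.trans (hτ.pos _ hg0)
    have ha' : 0 < τ h := ha.lt_of_ne fun ha0 => by simp [← ha0, hφ0] at hs'; linarith
    have hev : ∀ᶠ t in 𝓝[<] τ h, s < φ t :=
      ((φ.continuous.tendsto _).eventually (lt_mem_nhds hs')).filter_mono nhdsWithin_le_nhds
    obtain ⟨t, hst, ht0, hta⟩ := (hev.and (Ioo_mem_nhdsLT ha')).exists
    have hlevel : 1 ≤ qiOpen τ {x | s < compCc φ hφ0 h x} :=
      (hs.qiOpen_lt_eq_one hτ htot h0 ht0.le hta).symm.le.trans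
        (qiOpen_mono fun x hx => hst.trans_le (hφ (le_of_lt hx)))
    have := (mul_le_mul_right hlevel _).trans (hτ.ofReal_mul_qiOpen_le hg0 hs0)
    rwa [mul_one, ENNReal.ofReal_le_ofReal_iff (hτ.pos _ hg0)] at this

end Functional

section Product

variable {X Y : Type*} [TopologicalSpace X] [T2Space X] [TopologicalSpace Y]
  {ρ : C_c(X, ℝ) → ℝ} {η : C_c(Y, ℝ) → ℝ}

theorem coe_TCc {f : C_c(X × Y, ℝ)} (h : Continuous (Tmap ρ f) ∧ HasCompactSupport (Tmap ρ f)) :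
    ⇑(TCc ρ f) = Tmap ρ f := by
  rw [TCc, dif_pos h]
  rfl

theorem TCc_eq_zero_of_not {f : C_c(X × Y, ℝ)}
    (h : ¬(Continuous (Tmap ρ f) ∧ HasCompactSupport (Tmap ρ f))) : TCc ρ f = 0 := by
  rw [TCc, dif_neg h]

theorem tsupport_fiberY_subset (f : C_c(X × Y, ℝ)) (y : Y) :
    tsupport (fiberY f y) ⊆ {x | (x, y) ∈ tsupport f} :=
  closure_minimal (fun _ hx => subset_tsupport _ hx)
    ((isClosed_tsupport f).preimage (continuous_id.prodMk continuous_const))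

theorem TCc_const_mul (a : ℝ) (f : C_c(X × Y, ℝ)) :
    TCc (fun g => a * ρ g) f = a • TCc ρ f := by
  have hT : Tmap (fun g => a * ρ g) f = fun y => a * Tmap ρ f y := rfl
  have hmul : ∀ (c : ℝ) {F : Y → ℝ}, Continuous F ∧ HasCompactSupport F →
      Continuous (fun y => c * F y) ∧ HasCompactSupport (fun y => c * F y) := fun c _ hF =>
    ⟨continuous_const.mul hF.1, hF.2.comp_left (g := (c * ·)) (mul_zero c)⟩
  by_cases hcond : Continuous (Tmap ρ f) ∧ HasCompactSupport (Tmap ρ f)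
  · ext y
    rw [coe_TCc (hT ▸ hmul a hcond), CompactlySupportedContinuousMap.coe_smul, coe_TCc hcond, hT]
    rfl
  rcases eq_or_ne a 0 with rfl | ha
  · have h0 : Tmap (fun g => 0 * ρ g) f = 0 := funext fun _ => zero_mul _
    ext y
    rw [coe_TCc (h0 ▸ ⟨continuous_const, HasCompactSupport.zero⟩), h0, zero_smul]
    rfl
  · rw [TCc_eq_zero_of_not hcond, TCc_eq_zero_of_not, smul_zero]
    intro h'
    refine hcond ?_
    have := hmul a⁻¹ (hT ▸ h')
    simpa [inv_mul_cancel_left₀ ha] using this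

theorem prodQI_const_mul (hη : IsQuasiIntegral η) (a b : ℝ) (f : C_c(X × Y, ℝ)) :
    prodQI (fun g => b * η g) (fun g => a * ρ g) f = a * b * prodQI η ρ f := by
  simp only [prodQI, TCc_const_mul, hη.smul]
  ring

theorem TCc_tensor (hρ : IsQuasiIntegral ρ) (g : C_c(X, ℝ)) (h : C_c(Y, ℝ)) :
    TCc ρ (tensor g h) = ρ g • h := by
  have hT : Tmap ρ (tensor g h) = ⇑(ρ g • h) := by
    funext y
    have hfib : fiberY (tensor g h) y = h y • g := by
      ext x
      exact mul_comm (g x) (h y)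
    simp only [Tmap, hfib, hρ.smul, CompactlySupportedContinuousMap.coe_smul, Pi.smul_apply,
      smul_eq_mul, mul_comm]
  ext y
  rw [coe_TCc (hT ▸ ⟨(ρ g • h).continuous, (ρ g • h).hasCompactSupport'⟩), hT]

theorem prodQI_tensor (hρ : IsQuasiIntegral ρ) (hη : IsQuasiIntegral η)
    (g : C_c(X, ℝ)) (h : C_c(Y, ℝ)) : prodQI η ρ (tensor g h) = ρ g * η h := by
  rw [prodQI, TCc_tensor hρ, hη.smul]

theorem qiOpen_mul_le_qiOpen_prodQI (hρ : IsQuasiIntegral ρ) (hη : IsQuasiIntegral η)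
    (U : Set X) (V : Set Y) : qiOpen ρ U * qiOpen η V ≤ qiOpen (prodQI η ρ) (U ×ˢ V) := by
  simp only [qiOpen, ENNReal.iSup_mul, ENNReal.mul_iSup]
  refine iSup₂_le fun h ⟨hh, hhV⟩ => iSup₂_le fun g ⟨hg, hgU⟩ => ?_
  rw [← ENNReal.ofReal_mul (hρ.pos g fun x => (hg x).1), ← prodQI_tensor hρ hη]
  refine le_qiOpen (fun p => ⟨mul_nonneg (hg p.1).1 (hh p.2).1,
    mul_le_one₀ (hg p.1).2 (hh p.2).1 (hh p.2).2⟩) ?_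
  refine (closure_minimal (fun p hp => ?_) ((isClosed_tsupport g).prod (isClosed_tsupport h))).trans
    (prod_mono hgU hhV)
  obtain ⟨hg0, hh0⟩ := mul_ne_zero_iff.mp hp
  exact ⟨subset_tsupport _ hg0, subset_tsupport _ hh0⟩

theorem qiOpen_prodQI_le [T2Space Y] (hρ : IsQuasiIntegral ρ) (hη : IsQuasiIntegral η)
    (U : Set X) (V : Set Y) : qiOpen (prodQI η ρ) (U ×ˢ V) ≤ qiOpen ρ U * qiOpen η V := by
  refine qiOpen_le fun f hf hfUV => ?_
  by_cases hcond : Continuous (Tmap ρ f) ∧ HasCompactSupport (Tmap ρ f)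
  swap
  · simp [prodQI, TCc_eq_zero_of_not hcond, hη.map_zero]
  set g := TCc ρ f
  have hg : ∀ y, g y = ρ (fiberY f y) := congrFun (coe_TCc hcond)
  have hfib : ∀ y x, 0 ≤ fiberY f y x ∧ fiberY f y x ≤ 1 := fun y x => hf (x, y)
  have hg0 : ∀ y, 0 ≤ g y := fun y => hg y ▸ hρ.pos _ fun x => (hfib y x).1
  have hgU : ∀ y, ENNReal.ofReal (g y) ≤ qiOpen ρ U := fun y =>
    hg y ▸ le_qiOpen (hfib y) ((tsupport_fiberY_subset f y).trans fun x hx => (hfUV hx).1)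
  have hgV : tsupport g ⊆ V := by
    refine (closure_minimal (fun y hy => ?_)
      (f.hasCompactSupport'.image continuous_snd).isClosed).trans ?_
    · obtain ⟨x, hx⟩ : ∃ x, fiberY f y x ≠ 0 := by
        by_contra! hall
        exact hy (by rw [hg, show fiberY f y = 0 from CompactlySupportedContinuousMap.ext hall,
          hρ.map_zero])
      exact ⟨(x, y), subset_tsupport _ hx, rfl⟩
    · rintro y ⟨p, hp, rfl⟩
      exact (hfUV hp).2
  show ENNReal.ofReal (η g) ≤ _
  by_cases hU : qiOpen ρ U = ⊤
  · by_cases hV : qiOpen η V = 0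
    · simp [hη.map_eq_zero_of_qiOpen_eq_zero hg0 hgV hV]
    · simp [hU, ENNReal.top_mul hV]
  calc ENNReal.ofReal (η g) ≤ ENNReal.ofReal (qiOpen ρ U).toReal * qiOpen η V :=
        hη.ofReal_map_le hg0 (fun y => (ENNReal.ofReal_le_iff_le_toReal hU).mp (hgU y)) hgV
    _ = qiOpen ρ U * qiOpen η V := by rw [ENNReal.ofReal_toReal hU]

theorem qiOpen_prodQI [T2Space Y] (hρ : IsQuasiIntegral ρ) (hη : IsQuasiIntegral η)
    (U : Set X) (V : Set Y) : qiOpen (prodQI η ρ) (U ×ˢ V) = qiOpen ρ U * qiOpen η V :=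
  (qiOpen_prodQI_le hρ hη U V).antisymm (qiOpen_mul_le_qiOpen_prodQI hρ hη U V)

theorem IsSimpleQI.TCc_compCc (hρ : IsQuasiIntegral ρ) (hsρ : IsSimpleQI ρ)
    (htot : qiOpen ρ univ ≤ 1) {f : C_c(X × Y, ℝ)} (hf0 : ∀ p, 0 ≤ f p)
    (hcond : Continuous (Tmap ρ f) ∧ HasCompactSupport (Tmap ρ f)) {φ : C(ℝ, ℝ)}
    (hφ0 : φ 0 = 0) (hφ : Monotone φ) :
    TCc ρ (compCc φ hφ0 f) = compCc φ hφ0 (TCc ρ f) := by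
  have hT : Tmap ρ (compCc φ hφ0 f) = φ ∘ Tmap ρ f := funext fun y =>
    hsρ.map_compCc hρ htot (h := fiberY f y) (fun x => hf0 (x, y)) hφ0 hφ
  ext y
  rw [coe_TCc (hT ▸ ⟨φ.continuous.comp hcond.1, hcond.2.comp_left hφ0⟩), hT]
  simp [compCc, coe_TCc hcond]

theorem isSimpleQI_prodQI [T2Space Y] (hρ : IsQuasiIntegral ρ) (hη : IsQuasiIntegral η)
    (hsρ : IsSimpleQI ρ) (hsη : IsSimpleQI η) : IsSimpleQI (prodQI η ρ) := by
  refine isSimpleQI_of_qiOpen fun W hW => ?_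
  have hle : qiOpen (prodQI η ρ) W ≤ qiOpen ρ univ * qiOpen η univ :=
    (qiOpen_mono (subset_univ W)).trans (univ_prod_univ ▸ qiOpen_prodQI_le hρ hη univ univ)
  rcases hsρ.qiOpen_eq_zero_or_one isOpen_univ with hX | hX
  · exact Or.inl (nonpos_iff_eq_zero.mp (by simpa [hX] using hle))
  rcases hsη.qiOpen_eq_zero_or_one isOpen_univ with hY | hY
  · exact Or.inl (nonpos_iff_eq_zero.mp (by simpa [hY] using hle))
  rw [hX, hY, one_mul] at hle
  refine or_iff_not_imp_left.mpr fun hW0 => hle.antisymm ?_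
  obtain ⟨f, hf, hfW, hfpos⟩ := exists_pos_of_qiOpen_ne_zero hW0
  -- otherwise `TCc ρ f` would be the junk value `0`
  have hcond : Continuous (Tmap ρ f) ∧ HasCompactSupport (Tmap ρ f) := by
    by_contra h
    simp [prodQI, TCc_eq_zero_of_not h, hη.map_zero] at hfpos
  let φ : C(ℝ, ℝ) := ⟨fun r => min (r / prodQI η ρ f) 1, by fun_prop⟩
  have hφ0 : φ 0 = 0 := by simp [φ]
  have hφ : Monotone φ := fun r s hrs =>
    min_le_min_right 1 (div_le_div_of_nonneg_right hrs hfpos.le)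
  have hT0 : ∀ y, 0 ≤ TCc ρ f y := fun y => by
    rw [coe_TCc hcond]
    exact hρ.pos _ fun x => (hf (x, y)).1
  have hone : prodQI η ρ (compCc φ hφ0 f) = 1 := by
    rw [prodQI, hsρ.TCc_compCc hρ hX.le (fun p => (hf p).1) hcond hφ0 hφ,
      hsη.map_compCc hη hY.le hT0 hφ0 hφ]
    show min (prodQI η ρ f / prodQI η ρ f) 1 = 1
    rw [div_self hfpos.ne', min_self]
  have hφf : ∀ p, 0 ≤ compCc φ hφ0 f p ∧ compCc φ hφ0 f p ≤ 1 := fun p =>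
    ⟨hφ0 ▸ hφ (hf p).1, min_le_right _ _⟩
  simpa [hone] using le_qiOpen (τ := prodQI η ρ) hφf
    ((tsupport_compCc_subset φ hφ0 f).trans hfW)

theorem IsSimpleQI.exists_simple_factors [T2Space Y] (hρ : IsQuasiIntegral ρ)
    (hη : IsQuasiIntegral η) (hqi : IsQuasiIntegral (prodQI η ρ)) (hS : IsSimpleQI (prodQI η ρ)) :
    ∃ (ρ' : C_c(X, ℝ) → ℝ) (η' : C_c(Y, ℝ) → ℝ),
      IsQuasiIntegral ρ' ∧ IsQuasiIntegral η' ∧ IsSimpleQI ρ' ∧ IsSimpleQI η' ∧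
      ∀ f : C_c(X × Y, ℝ), prodQI η ρ f = prodQI η' ρ' f := by
  have hrect : ∀ U V, IsOpen U → IsOpen V →
      qiOpen ρ U * qiOpen η V = 0 ∨ qiOpen ρ U * qiOpen η V = 1 := fun U V hU hV =>
    qiOpen_prodQI hρ hη U V ▸ hS.qiOpen_eq_zero_or_one (hU.prod hV)
  refine ⟨fun g => (qiOpen η univ).toReal * ρ g, fun g => (qiOpen ρ univ).toReal * η g,
    hρ.const_mul ENNReal.toReal_nonneg, hη.const_mul ENNReal.toReal_nonneg,
    isSimpleQI_of_qiOpen fun U hU => ?_, isSimpleQI_of_qiOpen fun V hV => ?_, fun f => ?_⟩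
  · rw [qiOpen_const_mul ENNReal.toReal_nonneg]
    by_cases htop : qiOpen η univ = ⊤
    · simp [htop]
    rw [ENNReal.ofReal_toReal htop, mul_comm]
    exact hrect U univ hU isOpen_univ
  · rw [qiOpen_const_mul ENNReal.toReal_nonneg]
    by_cases htop : qiOpen ρ univ = ⊤
    · simp [htop]
    rw [ENNReal.ofReal_toReal htop]
    exact hrect univ V isOpen_univ hV
  · rw [prodQI_const_mul hη, ← ENNReal.toReal_mul, mul_comm (qiOpen η univ),
      ← qiOpen_prodQI hρ hη, univ_prod_univ]
    rcases hS.qiOpen_eq_zero_or_one isOpen_univ with h0 | h1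
    · simp [h0, hqi.eq_zero_of_qiOpen_univ_eq_zero h0 f]
    · simp [h1]

end Product

theorem statement12_general {X Y : Type*}
    [TopologicalSpace X] [T2Space X]
    [TopologicalSpace Y] [T2Space Y]
    (ρ : C_c(X, ℝ) → ℝ) (η : C_c(Y, ℝ) → ℝ)
    (hρ : IsQuasiIntegral ρ) (hη : IsQuasiIntegral η)
    (hqi : IsQuasiIntegral (prodQI η ρ)) :
    IsSimpleQI (prodQI η ρ) ↔
      ∃ (ρ' : C_c(X, ℝ) → ℝ) (η' : C_c(Y, ℝ) → ℝ),
        IsQuasiIntegral ρ' ∧ IsQuasiIntegral η' ∧ IsSimpleQI ρ' ∧ IsSimpleQI η' ∧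
        ∀ f : C_c(X × Y, ℝ), prodQI η ρ f = prodQI η' ρ' f := by
  refine ⟨fun hS => hS.exists_simple_factors hρ hη hqi, ?_⟩
  rintro ⟨ρ', η', hρ', hη', hsρ', hsη', hprod⟩
  rw [funext hprod]
  exact isSimpleQI_prodQI hρ' hη' hsρ' hsη'

theorem statement12 {X Y : Type*}
    [TopologicalSpace X] [LocallyCompactSpace X] [T2Space X] [ConnectedSpace X]
    [TopologicalSpace Y] [LocallyCompactSpace Y] [T2Space Y] [ConnectedSpace Y]
    (ρ : C_c(X, ℝ) → ℝ) (η : C_c(Y, ℝ) → ℝ)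
    (hρ : IsQuasiIntegral ρ) (hη : IsQuasiIntegral η)
    (hqi : IsQuasiIntegral (prodQI η ρ)) :
    IsSimpleQI (prodQI η ρ) ↔
      ∃ (ρ' : C_c(X, ℝ) → ℝ) (η' : C_c(Y, ℝ) → ℝ),
        IsQuasiIntegral ρ' ∧ IsQuasiIntegral η' ∧ IsSimpleQI ρ' ∧ IsSimpleQI η' ∧
        ∀ f : C_c(X × Y, ℝ), prodQI η ρ f = prodQI η' ρ' f :=
  statement12_general ρ η hρ hη hqi
end QLF
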